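/- arXiv:math/0505599 — 2 statements merged into one kernel-verified Lean document; each statement's English description precedes it below -/
import Mathlib

section
/- If ρ > σ₁/σ₂, then P(λ₂^{opt}(n) < 0) → 1 as n → ∞; that is, the cross-validated weight on the second sample is eventually negative with probability tending to one. -/
open MeasureTheory ProbabilityTheory Filter

/-- Leave-one-out mean from the first `n` observations, deleting the `j`-th one. -/
noncomputable def looM {Ω : Type*} (Y : ℕ → Ω → ℝ) (n j : ℕ) (ω : Ω) : ℝ :=
  (1 / ((n : ℝ) - 1)) * ∑ k ∈ (Finset.range n).erase j, Y k ω

/-- `S₁ᵉ = (1/n) ∑ⱼ (X̄₁^{(−j)} − X̄₂^{(−j)})²`. -/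
noncomputable def S1e {Ω : Type*} (Y1 Y2 : ℕ → Ω → ℝ) (n : ℕ) (ω : Ω) : ℝ :=
  (1 / (n : ℝ)) * ∑ j ∈ Finset.range n, (looM Y1 n j ω - looM Y2 n j ω) ^ 2

/-- `S₂ᵉ = (1/n) ∑ⱼ (X̄₁^{(−j)} − X̄₂^{(−j)})(X̄₁^{(−j)} − X_{1j})`. -/
noncomputable def S2e {Ω : Type*} (Y1 Y2 : ℕ → Ω → ℝ) (n : ℕ) (ω : Ω) : ℝ :=
  (1 / (n : ℝ)) * ∑ j ∈ Finset.range n,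
    (looM Y1 n j ω - looM Y2 n j ω) * (looM Y1 n j ω - Y1 j ω)

/-- The cross-validated weight `λ₂^{opt}(n) = S₂ᵉ/S₁ᵉ` (junk value when `S₁ᵉ = 0`). -/
noncomputable def lam2opt {Ω : Type*} (Y1 Y2 : ℕ → Ω → ℝ) (n : ℕ) (ω : Ω) : ℝ :=
  S2e Y1 Y2 n ω / S1e Y1 Y2 n ω

open Finset Topology

/-! Up to the positive factor `n / (n - 1)²`, `S₂ᵉ` is the empirical covariance of `X₁` with
`X₁ - X₂`, so by the strong law it has the sign of `Cov(X₁, X₁ - X₂) = σ₁² - ρ σ₁ σ₂ < 0` for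
all large `n`, almost surely. As `S₁ᵉ ≥ 0` vanishes only when `S₂ᵉ` does, `λ₂^{opt} = S₂ᵉ / S₁ᵉ`
is then negative, and an event that almost surely occurs eventually has probability tending
to one. -/

noncomputable def empMean {Ω : Type*} (Y : ℕ → Ω → ℝ) (n : ℕ) (ω : Ω) : ℝ :=
  (∑ j ∈ range n, Y j ω) / n

noncomputable def empCov {Ω : Type*} (Y Z : ℕ → Ω → ℝ) (n : ℕ) (ω : Ω) : ℝ :=
  empMean (fun j ω => Y j ω * Z j ω) n ω - empMean Y n ω * empMean Z n ω

section Algebra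

variable {Ω : Type*} (Y1 Y2 : ℕ → Ω → ℝ)

lemma S2e_eq_mul_empCov {n : ℕ} (hn : 2 ≤ n) (ω : Ω) :
    S2e Y1 Y2 n ω =
      n / ((n : ℝ) - 1) ^ 2 * empCov Y1 (fun j ω => Y1 j ω - Y2 j ω) n ω := by
  have hn1 : (n : ℝ) - 1 ≠ 0 := by
    have : (2 : ℝ) ≤ n := by exact_mod_cast hn
    linarith
  have hn0 : (n : ℝ) ≠ 0 := by positivity
  set A := ∑ j ∈ range n, Y1 j ω with hA
  set B := ∑ j ∈ range n, Y2 j ω with hB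
  have hterm : ∀ j ∈ range n,
      (looM Y1 n j ω - looM Y2 n j ω) * (looM Y1 n j ω - Y1 j ω) =
        (A * (A - B) + (n * B - (n + 1) * A) * Y1 j ω + A * Y2 j ω
          + n * (Y1 j ω * (Y1 j ω - Y2 j ω))) / ((n : ℝ) - 1) ^ 2 := by
    intro j hj
    simp only [looM, sum_erase_eq_sub hj, ← hA, ← hB]
    field_simp
    ring
  rw [S2e, sum_congr rfl hterm, ← sum_div]
  simp only [empCov, empMean, sum_add_distrib, ← sum_mul, ← mul_sum, sum_sub_distrib,
    sum_const, card_range, nsmul_eq_mul, ← hA, ← hB]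
  field_simp
  ring

lemma S2e_eq_zero_of_S1e_eq_zero {n : ℕ} {ω : Ω} (h : S1e Y1 Y2 n ω = 0) :
    S2e Y1 Y2 n ω = 0 := by
  rcases mul_eq_zero.1 h with hn | hsq
  · rw [S2e, hn, zero_mul]
  · have hdiff : ∀ j ∈ range n, looM Y1 n j ω - looM Y2 n j ω = 0 := fun j hj =>
      pow_eq_zero_iff two_ne_zero |>.1 <|
        (sum_eq_zero_iff_of_nonneg fun _ _ => sq_nonneg _).1 hsq j hj
    rw [S2e, sum_eq_zero fun j hj => by rw [hdiff j hj, zero_mul], mul_zero]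

lemma lam2opt_neg_of_S2e_neg {n : ℕ} {ω : Ω} (h : S2e Y1 Y2 n ω < 0) :
    lam2opt Y1 Y2 n ω < 0 := by
  have hS1 : 0 ≤ S1e Y1 Y2 n ω := by unfold S1e; positivity
  rcases hS1.lt_or_eq with hpos | hzero
  · exact div_neg_of_neg_of_pos h hpos
  · exact absurd (S2e_eq_zero_of_S1e_eq_zero Y1 Y2 hzero.symm) h.ne

end Algebra

lemma tendsto_measure_of_ae_eventually_mem {Ω : Type*} [MeasurableSpace Ω] {μ : Measure Ω}
    [IsProbabilityMeasure μ] {A : ℕ → Set Ω} (h : ∀ᵐ ω ∂μ, ∀ᶠ n in atTop, ω ∈ A n) :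
    Tendsto (fun n => μ (A n)) atTop (𝓝 1) := by
  let B : ℕ → Set Ω := fun n => ⋂ m ≥ n, A m
  have hB : Monotone B := fun i j hij =>
    Set.iInter₂_mono' fun m hm => ⟨m, hij.trans hm, le_rfl⟩
  have hfull : μ (⋃ n, B n) = 1 := by
    rw [← measure_univ (μ := μ)]
    refine measure_congr (ae_eq_univ.2 (ae_iff.1 ?_))
    filter_upwards [h] with ω hω
    obtain ⟨N, hN⟩ := eventually_atTop.1 hω
    exact Set.mem_iUnion.2 ⟨N, Set.mem_iInter₂.2 hN⟩
  refine tendsto_of_tendsto_of_tendsto_of_le_of_le (hfull ▸ tendsto_measure_iUnion_atTop hB)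
    tendsto_const_nhds (fun n => measure_mono (Set.biInter_subset_of_mem le_rfl))
    (fun _ => prob_le_one)

section StrongLaw

variable {Ω E : Type*} [MeasurableSpace Ω] [MeasurableSpace E] (μ : Measure Ω)
  {X : ℕ → Ω → E}

lemma ae_tendsto_empMean_comp (hindep : iIndepFun X μ)
    (hident : ∀ j, IdentDistrib (X j) (X 0) μ μ) {f : E → ℝ} (hf : Measurable f)
    (hint : Integrable (fun ω => f (X 0 ω)) μ) :
    ∀ᵐ ω ∂μ, Tendsto (fun n => empMean (fun j ω => f (X j ω)) n ω) atTop
      (𝓝 (∫ ω, f (X 0 ω) ∂μ)) :=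
  strong_law_ae_real (fun j ω => f (X j ω)) hint
    (fun _ _ hij => (hindep.indepFun hij).comp hf hf) (fun j => (hident j).comp hf)

lemma ae_tendsto_empCov_comp [IsProbabilityMeasure μ] (hindep : iIndepFun X μ)
    (hident : ∀ j, IdentDistrib (X j) (X 0) μ μ) {f g : E → ℝ}
    (hf : Measurable f) (hg : Measurable g)
    (hf2 : MemLp (fun ω => f (X 0 ω)) 2 μ) (hg2 : MemLp (fun ω => g (X 0 ω)) 2 μ) :
    ∀ᵐ ω ∂μ, Tendsto (fun n => empCov (fun j ω => f (X j ω)) (fun j ω => g (X j ω)) n ω)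
      atTop (𝓝 cov[fun ω => f (X 0 ω), fun ω => g (X 0 ω); μ]) := by
  rw [covariance_eq_sub hf2 hg2]
  filter_upwards [ae_tendsto_empMean_comp μ hindep hident (hf.mul hg) (hf2.integrable_mul hg2),
    ae_tendsto_empMean_comp μ hindep hident hf (hf2.integrable one_le_two),
    ae_tendsto_empMean_comp μ hindep hident hg (hg2.integrable one_le_two)]
    with ω hfg hf hg
  exact hfg.sub (hf.mul hg)

end StrongLaw

theorem stmt_9_general {Ω : Type*} [MeasurableSpace Ω] (μ : Measure Ω) [IsProbabilityMeasure μ]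
    (X : ℕ → Ω → ℝ × ℝ)
    (hindep : iIndepFun X μ)
    (hident : ∀ j, IdentDistrib (X j) (X 0) μ μ)
    (hL2a : MemLp (fun ω => (X 0 ω).1) 2 μ)
    (hL2b : MemLp (fun ω => (X 0 ω).2) 2 μ)
    (θ1 θ2 σ1 σ2 ρ : ℝ)
    (hθ1 : θ1 = ∫ ω, (X 0 ω).1 ∂μ) (hθ2 : θ2 = ∫ ω, (X 0 ω).2 ∂μ)
    (hσ1 : σ1 ^ 2 = variance (fun ω => (X 0 ω).1) μ)
    (hσ1pos : 0 < σ1) (hσ2pos : 0 < σ2)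
    (hρ : ρ * (σ1 * σ2) = ∫ ω, ((X 0 ω).1 - θ1) * ((X 0 ω).2 - θ2) ∂μ)
    (hcond : σ1 / σ2 < ρ) :
    Tendsto
      (fun n => μ {ω | lam2opt (fun j ω => (X j ω).1) (fun j ω => (X j ω).2) n ω < 0})
      atTop (nhds 1) := by
  have hρcov : ρ * (σ1 * σ2) = cov[fun ω => (X 0 ω).1, fun ω => (X 0 ω).2; μ] := by
    rw [hρ, hθ1, hθ2]; rfl
  have hlim_neg : cov[fun ω => (X 0 ω).1, fun ω => (X 0 ω).1 - (X 0 ω).2; μ] < 0 := by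
    rw [covariance_fun_sub_right hL2a hL2a hL2b, covariance_self hL2a.aemeasurable, ← hσ1,
      ← hρcov]
    have := mul_lt_mul_of_pos_left ((div_lt_iff₀ hσ2pos).1 hcond) hσ1pos
    linarith
  have hlim := ae_tendsto_empCov_comp μ hindep hident measurable_fst
    (measurable_fst.sub measurable_snd) hL2a (hL2a.sub hL2b)
  refine tendsto_measure_of_ae_eventually_mem ?_
  filter_upwards [hlim] with ω hω
  filter_upwards [hω.eventually (gt_mem_nhds hlim_neg), eventually_ge_atTop 2] with n hneg hn
  have hfactor : 0 < (n : ℝ) / ((n : ℝ) - 1) ^ 2 := by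
    have : (2 : ℝ) ≤ n := by exact_mod_cast hn
    exact div_pos (by positivity) (pow_pos (by linarith) 2)
  refine lam2opt_neg_of_S2e_neg _ _ ?_
  rw [S2e_eq_mul_empCov _ _ hn]
  exact mul_neg_of_pos_of_neg hfactor hneg

/-- If `ρ > σ₁/σ₂`, then `P(λ₂^{opt}(n) < 0) → 1` as `n → ∞`. -/
theorem stmt_9 {Ω : Type*} [MeasurableSpace Ω] (μ : Measure Ω) [IsProbabilityMeasure μ]
    (X : ℕ → Ω → ℝ × ℝ) (hmeas : ∀ j, Measurable (X j))
    (hindep : iIndepFun X μ)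
    (hident : ∀ j, IdentDistrib (X j) (X 0) μ μ)
    (hL2a : MemLp (fun ω => (X 0 ω).1) 2 μ)
    (hL2b : MemLp (fun ω => (X 0 ω).2) 2 μ)
    (θ1 θ2 σ1 σ2 ρ : ℝ)
    (hθ1 : θ1 = ∫ ω, (X 0 ω).1 ∂μ) (hθ2 : θ2 = ∫ ω, (X 0 ω).2 ∂μ)
    (hσ1 : σ1 ^ 2 = variance (fun ω => (X 0 ω).1) μ)
    (hσ2 : σ2 ^ 2 = variance (fun ω => (X 0 ω).2) μ)
    (hσ1pos : 0 < σ1) (hσ2pos : 0 < σ2)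
    (hρ : ρ * (σ1 * σ2) = ∫ ω, ((X 0 ω).1 - θ1) * ((X 0 ω).2 - θ2) ∂μ)
    (hcond : σ1 / σ2 < ρ) :
    Tendsto
      (fun n => μ {ω | lam2opt (fun j ω => (X j ω).1) (fun j ω => (X j ω).2) n ω < 0})
      atTop (nhds 1) :=
  stmt_9_general μ X hindep hident hL2a hL2b θ1 θ2 σ1 σ2 ρ hθ1 hθ2 hσ1 hσ1pos hσ2pos hρ hcond
end

section
/- If θ₁⁰ ≠ θ₂⁰, then λ₁^{opt}(n) → 1 and λ₂^{opt}(n) → 0 in probability as n → ∞; that is, for every ε > 0, P(|λ₁^{opt}(n) − 1| ≤ ε) → 1 and P(|λ₂^{opt}(n)| < ε) → 1. -/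
/-! The two cross-validation statistics are explicit functions of sample means:
`S₁ᵉ = D̄² + (mean(D²) − D̄²)/(n−1)²` and `S₂ᵉ = n/(n−1)² · (mean(D·X₁) − D̄·X̄₁)`, where
`D = X₁ − X₂`. By the strong law of large numbers these sample means converge almost surely, so
`S₁ᵉ → (θ₁⁰ − θ₂⁰)² > 0` while `S₂ᵉ → 0`, the prefactor `n/(n−1)²` killing a convergent
sample covariance. Hence `λ₂^{opt}(n) → 0` almost surely, and a fortiori in probability. -/

open MeasureTheory ProbabilityTheory Filter

open Finset Topology

noncomputable def sampleMean (y : ℕ → ℝ) (n : ℕ) : ℝ := (∑ j ∈ range n, y j) / n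

lemma sum_sub_mul_sub {ι R : Type*} [CommRing R] (s : Finset ι) (a b : R) (x y : ι → R) :
    ∑ j ∈ s, (a - x j) * (b - y j)
      = #s * a * b - a * ∑ j ∈ s, y j - b * ∑ j ∈ s, x j + ∑ j ∈ s, x j * y j := by
  simp only [sub_mul, mul_sub, sum_sub_distrib, sum_const, nsmul_eq_mul,
    ← mul_sum, ← sum_mul]
  ring

lemma natCast_sub_one_ne_zero {n : ℕ} (hn : 2 ≤ n) : (n : ℝ) - 1 ≠ 0 := by
  have : (2 : ℝ) ≤ n := by exact_mod_cast hn
  linarith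

section Algebra

variable {Ω : Type*} (Y Y1 Y2 : ℕ → Ω → ℝ) {n : ℕ} (ω : Ω)

lemma looM_eq_of_mem {j : ℕ} (hj : j ∈ range n) :
    looM Y n j ω = (∑ k ∈ range n, Y k ω - Y j ω) / (n - 1) := by
  rw [looM, ← sum_erase_add _ _ hj]
  ring

lemma looM_sub_looM (j : ℕ) : looM Y1 n j ω - looM Y2 n j ω = looM (Y1 - Y2) n j ω := by
  simp only [looM, Pi.sub_apply, sum_sub_distrib]
  ring

lemma S1e_eq (hn : 2 ≤ n) :
    S1e Y1 Y2 n ω = sampleMean (fun j => Y1 j ω - Y2 j ω) n ^ 2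
      + (sampleMean (fun j => (Y1 j ω - Y2 j ω) ^ 2) n
          - sampleMean (fun j => Y1 j ω - Y2 j ω) n ^ 2) / (n - 1) ^ 2 := by
  have hn1 := natCast_sub_one_ne_zero hn
  have hsum : ∑ j ∈ range n, (looM Y1 n j ω - looM Y2 n j ω) ^ 2
      = ∑ j ∈ range n, (∑ k ∈ range n, (Y1 - Y2) k ω - (Y1 - Y2) j ω)
          * (∑ k ∈ range n, (Y1 - Y2) k ω - (Y1 - Y2) j ω) / (n - 1) ^ 2 := by
    refine sum_congr rfl fun j hj => ?_
    rw [looM_sub_looM, looM_eq_of_mem _ _ hj]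
    field_simp
  rw [S1e, hsum, ← sum_div, sum_sub_mul_sub, card_range]
  simp only [sampleMean, Pi.sub_apply]
  field_simp
  ring

lemma S2e_eq (hn : 2 ≤ n) :
    S2e Y1 Y2 n ω = n / (n - 1) ^ 2 * (sampleMean (fun j => (Y1 j ω - Y2 j ω) * Y1 j ω) n
      - sampleMean (fun j => Y1 j ω - Y2 j ω) n * sampleMean (fun j => Y1 j ω) n) := by
  have hn1 := natCast_sub_one_ne_zero hn
  have hsum : ∑ j ∈ range n, (looM Y1 n j ω - looM Y2 n j ω) * (looM Y1 n j ω - Y1 j ω)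
      = ∑ j ∈ range n, (∑ k ∈ range n, (Y1 - Y2) k ω - (Y1 - Y2) j ω)
          * (∑ k ∈ range n, Y1 k ω - n * Y1 j ω) / (n - 1) ^ 2 := by
    refine sum_congr rfl fun j hj => ?_
    rw [looM_sub_looM, looM_eq_of_mem _ _ hj, looM_eq_of_mem _ _ hj]
    field_simp
    ring
  rw [S2e, hsum, ← sum_div, sum_sub_mul_sub, card_range]
  simp only [sampleMean, Pi.sub_apply, mul_left_comm _ (n : ℝ), ← mul_sum]
  field_simp
  ring

end Algebra

lemma tendsto_inv_natCast_sub_one_sq :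
    Tendsto (fun n : ℕ => 1 / ((n : ℝ) - 1) ^ 2) atTop (𝓝 0) := by
  have h : Tendsto (fun n : ℕ => (n : ℝ) - 1) atTop atTop :=
    tendsto_atTop_add_const_right atTop (-1) tendsto_natCast_atTop_atTop
  simp only [one_div]
  exact ((tendsto_pow_atTop two_ne_zero).comp h).inv_tendsto_atTop

lemma tendsto_natCast_div_sub_one_sq :
    Tendsto (fun n : ℕ => (n : ℝ) / ((n : ℝ) - 1) ^ 2) atTop (𝓝 0) := by
  have h : Tendsto (fun n : ℕ => (n : ℝ) - 1) atTop atTop :=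
    tendsto_atTop_add_const_right atTop (-1) tendsto_natCast_atTop_atTop
  have hsum : Tendsto (fun n : ℕ => ((n : ℝ) - 1)⁻¹ + 1 / ((n : ℝ) - 1) ^ 2) atTop (𝓝 0) := by
    simpa using h.inv_tendsto_atTop.add tendsto_inv_natCast_sub_one_sq
  refine hsum.congr' ?_
  filter_upwards [eventually_ge_atTop 2] with n hn
  have hn1 := natCast_sub_one_ne_zero hn
  field_simp
  ring

section Limits

variable {Ω : Type*} {Y1 Y2 : ℕ → Ω → ℝ} {ω : Ω} {d : ℝ}

lemma tendsto_S1e (hD : Tendsto (sampleMean fun j => Y1 j ω - Y2 j ω) atTop (𝓝 d)) {q : ℝ}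
    (hD2 : Tendsto (sampleMean fun j => (Y1 j ω - Y2 j ω) ^ 2) atTop (𝓝 q)) :
    Tendsto (fun n => S1e Y1 Y2 n ω) atTop (𝓝 (d ^ 2)) := by
  have h := (hD.pow 2).add ((hD2.sub (hD.pow 2)).mul tendsto_inv_natCast_sub_one_sq)
  rw [mul_zero, add_zero] at h
  refine h.congr' ?_
  filter_upwards [eventually_ge_atTop 2] with n hn
  rw [S1e_eq _ _ _ hn, mul_one_div]

lemma tendsto_S2e (hD : Tendsto (sampleMean fun j => Y1 j ω - Y2 j ω) atTop (𝓝 d)) {r m : ℝ}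
    (hDY : Tendsto (sampleMean fun j => (Y1 j ω - Y2 j ω) * Y1 j ω) atTop (𝓝 r))
    (hY : Tendsto (sampleMean fun j => Y1 j ω) atTop (𝓝 m)) :
    Tendsto (fun n => S2e Y1 Y2 n ω) atTop (𝓝 0) := by
  have h := tendsto_natCast_div_sub_one_sq.mul (hDY.sub (hD.mul hY))
  rw [zero_mul] at h
  refine h.congr' ?_
  filter_upwards [eventually_ge_atTop 2] with n hn
  rw [S2e_eq _ _ _ hn]

end Limits

section Probability

variable {Ω : Type*} [MeasurableSpace Ω] {μ : Measure Ω}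

lemma ae_tendsto_sampleMean_comp {E : Type*} [MeasurableSpace E] {X : ℕ → Ω → E}
    (hindep : Pairwise fun i j => IndepFun (X i) (X j) μ)
    (hident : ∀ j, IdentDistrib (X j) (X 0) μ μ) {f : E → ℝ} (hf : Measurable f)
    (hint : Integrable (fun ω => f (X 0 ω)) μ) :
    ∀ᵐ ω ∂μ, Tendsto (sampleMean fun j => f (X j ω)) atTop (𝓝 (∫ ω, f (X 0 ω) ∂μ)) :=
  strong_law_ae_real (fun j ω => f (X j ω)) hint
    (fun _ _ hij => (hindep hij).comp hf hf) (fun j => (hident j).comp hf)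

lemma ae_tendsto_lam2opt_zero [IsFiniteMeasure μ] {X : ℕ → Ω → ℝ × ℝ}
    (hindep : Pairwise fun i j => IndepFun (X i) (X j) μ)
    (hident : ∀ j, IdentDistrib (X j) (X 0) μ μ)
    (hL2a : MemLp (fun ω => (X 0 ω).1) 2 μ) (hL2b : MemLp (fun ω => (X 0 ω).2) 2 μ)
    (hne : ∫ ω, (X 0 ω).1 ∂μ ≠ ∫ ω, (X 0 ω).2 ∂μ) :
    ∀ᵐ ω ∂μ, Tendsto (fun n => lam2opt (fun j ω => (X j ω).1) (fun j ω => (X j ω).2) n ω)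
      atTop (𝓝 0) := by
  have hL2D := hL2a.sub hL2b
  have slln {f : ℝ × ℝ → ℝ} (hf : Measurable f) (hint : Integrable (fun ω => f (X 0 ω)) μ) :=
    ae_tendsto_sampleMean_comp hindep hident hf hint
  have hd : ∫ ω, ((X 0 ω).1 - (X 0 ω).2) ∂μ ≠ 0 := by
    rw [integral_sub (hL2a.integrable one_le_two) (hL2b.integrable one_le_two)]
    exact sub_ne_zero.mpr hne
  filter_upwards [slln (f := fun p => p.1 - p.2) (by fun_prop) (hL2D.integrable one_le_two),
    slln (f := fun p => (p.1 - p.2) ^ 2) (by fun_prop) hL2D.integrable_sq,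
    slln (f := fun p => (p.1 - p.2) * p.1) (by fun_prop) (hL2D.integrable_mul hL2a),
    slln measurable_fst (hL2a.integrable one_le_two)] with ω hD hD2 hDY hY
  set Y1 : ℕ → Ω → ℝ := fun j ω => (X j ω).1
  set Y2 : ℕ → Ω → ℝ := fun j ω => (X j ω).2
  have hS1 := tendsto_S1e (Y1 := Y1) (Y2 := Y2) hD hD2
  have hS2 := tendsto_S2e (Y1 := Y1) (Y2 := Y2) hD hDY hY
  have hlam := hS2.div hS1 (pow_ne_zero 2 hd)
  rwa [zero_div] at hlam

lemma tendsto_measure_abs_lt_of_tendstoInMeasure [IsProbabilityMeasure μ] {f : ℕ → Ω → ℝ}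
    (hf : TendstoInMeasure μ f atTop 0) {ε : ℝ} (hε : 0 < ε) :
    Tendsto (fun n => μ {ω | |f n ω| < ε}) atTop (𝓝 1) := by
  have hbad : Tendsto (fun n => μ {ω | ε ≤ |f n ω|}) atTop (𝓝 0) := by
    simpa [Real.dist_eq] using tendstoInMeasure_iff_dist.mp hf ε hε
  have hlower : Tendsto (fun n => 1 - μ {ω | ε ≤ |f n ω|}) atTop (𝓝 1) := by
    simpa using ENNReal.Tendsto.sub tendsto_const_nhds hbad (Or.inl ENNReal.one_ne_top)
  refine tendsto_of_tendsto_of_tendsto_of_le_of_le hlower tendsto_const_nhds (fun n => ?_)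
    (fun n => prob_le_one)
  -- subadditivity needs no measurability of the sets
  have hcover : Set.univ ⊆ {ω | |f n ω| < ε} ∪ {ω | ε ≤ |f n ω|} :=
    fun ω _ => lt_or_ge |f n ω| ε
  rw [tsub_le_iff_right, ← measure_univ (μ := μ)]
  exact (measure_mono hcover).trans (measure_union_le _ _)

lemma aemeasurable_lam2opt {Y1 Y2 : ℕ → Ω → ℝ} (h1 : ∀ j, AEMeasurable (Y1 j) μ)
    (h2 : ∀ j, AEMeasurable (Y2 j) μ) (n : ℕ) : AEMeasurable (lam2opt Y1 Y2 n) μ := by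
  unfold lam2opt S2e S1e looM
  fun_prop

end Probability

theorem stmt_10_general {Ω : Type*} [MeasurableSpace Ω] (μ : Measure Ω) [IsProbabilityMeasure μ]
    (X : ℕ → Ω → ℝ × ℝ)
    (hindep : iIndepFun X μ)
    (hident : ∀ j, IdentDistrib (X j) (X 0) μ μ)
    (hL2a : MemLp (fun ω => (X 0 ω).1) 2 μ)
    (hL2b : MemLp (fun ω => (X 0 ω).2) 2 μ)
    (θ1 θ2 : ℝ)
    (hθ1 : θ1 = ∫ ω, (X 0 ω).1 ∂μ) (hθ2 : θ2 = ∫ ω, (X 0 ω).2 ∂μ)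
    (hne : θ1 ≠ θ2) :
    ∀ ε : ℝ, 0 < ε →
      Tendsto
        (fun n => μ {ω |
          |(1 - lam2opt (fun j ω => (X j ω).1) (fun j ω => (X j ω).2) n ω) - 1| ≤ ε})
        atTop (nhds 1)
      ∧ Tendsto
        (fun n => μ {ω |
          |lam2opt (fun j ω => (X j ω).1) (fun j ω => (X j ω).2) n ω| < ε})
        atTop (nhds 1) := by
  subst hθ1 hθ2
  have hae := ae_tendsto_lam2opt_zero (fun _ _ hij => hindep.indepFun hij) hident hL2a hL2b hne
  have hmeas n := aemeasurable_lam2opt (μ := μ) (fun j => (hident j).aemeasurable_fst.fst)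
    (fun j => (hident j).aemeasurable_fst.snd) n
  have hprob := tendstoInMeasure_of_tendsto_ae (fun n => (hmeas n).aestronglyMeasurable) hae
  intro ε hε
  have hlt := tendsto_measure_abs_lt_of_tendstoInMeasure hprob hε
  refine ⟨?_, hlt⟩
  simp only [sub_sub_cancel_left, abs_neg]
  exact tendsto_of_tendsto_of_tendsto_of_le_of_le hlt tendsto_const_nhds
    (fun n => measure_mono fun ω (h : _ < ε) => h.le) (fun n => prob_le_one)

/-- If `θ₁⁰ ≠ θ₂⁰`, then `λ₁^{opt}(n) → 1` and `λ₂^{opt}(n) → 0` in probability. -/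
theorem stmt_10 {Ω : Type*} [MeasurableSpace Ω] (μ : Measure Ω) [IsProbabilityMeasure μ]
    (X : ℕ → Ω → ℝ × ℝ) (hmeas : ∀ j, Measurable (X j))
    (hindep : iIndepFun X μ)
    (hident : ∀ j, IdentDistrib (X j) (X 0) μ μ)
    (hL2a : MemLp (fun ω => (X 0 ω).1) 2 μ)
    (hL2b : MemLp (fun ω => (X 0 ω).2) 2 μ)
    (θ1 θ2 σ1 σ2 ρ : ℝ)
    (hθ1 : θ1 = ∫ ω, (X 0 ω).1 ∂μ) (hθ2 : θ2 = ∫ ω, (X 0 ω).2 ∂μ)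
    (hσ1 : σ1 ^ 2 = variance (fun ω => (X 0 ω).1) μ)
    (hσ2 : σ2 ^ 2 = variance (fun ω => (X 0 ω).2) μ)
    (hσ1pos : 0 < σ1) (hσ2pos : 0 < σ2)
    (hρ : ρ * (σ1 * σ2) = ∫ ω, ((X 0 ω).1 - θ1) * ((X 0 ω).2 - θ2) ∂μ)
    (hne : θ1 ≠ θ2) :
    ∀ ε : ℝ, 0 < ε →
      Tendsto
        (fun n => μ {ω |
          |(1 - lam2opt (fun j ω => (X j ω).1) (fun j ω => (X j ω).2) n ω) - 1| ≤ ε})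
        atTop (nhds 1)
      ∧ Tendsto
        (fun n => μ {ω |
          |lam2opt (fun j ω => (X j ω).1) (fun j ω => (X j ω).2) n ω| < ε})
        atTop (nhds 1) :=
  stmt_10_general μ X hindep hident hL2a hL2b θ1 θ2 hθ1 hθ2 hne
end
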